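/- Let q ∈ (0,1) and m, s on ℓ²(ℤ) defined by m e_k = q^k e_k, s e_k = e_{k+1}. Set a = m⊗s*, b = s⊗m on ℓ²(ℤ)⊗ℓ²(ℤ). Then a and b are normal, and their polar decompositions are |a| = m⊗1, u = 1⊗s*, |b| = 1⊗m, v = s⊗1; moreover |a|v = q v|a|, |b|u = q⁻¹ u|b|, uv = vu, and |a|,|b| commute. -/
import Mathlib


theorem polar_decomposition_real_azb (q : ℝ) (hq0 : 0 < q) (hq1 : q < 1) :
    -- operators on ℓ²(ℤ) ⊗ ℓ²(ℤ), acting on the (dense) coefficient functions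
    let qc : ℤ → ℂ := fun k => ((q : ℂ)) ^ k
    let a : (ℤ × ℤ → ℂ) → ℤ × ℤ → ℂ := fun f p => qc p.1 * f (p.1, p.2 + 1)
    let aStar : (ℤ × ℤ → ℂ) → ℤ × ℤ → ℂ := fun f p => qc p.1 * f (p.1, p.2 - 1)
    let b : (ℤ × ℤ → ℂ) → ℤ × ℤ → ℂ := fun f p => qc p.2 * f (p.1 - 1, p.2)
    let bStar : (ℤ × ℤ → ℂ) → ℤ × ℤ → ℂ := fun f p => qc p.2 * f (p.1 + 1, p.2)
    let absa : (ℤ × ℤ → ℂ) → ℤ × ℤ → ℂ := fun f p => qc p.1 * f p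
    let u : (ℤ × ℤ → ℂ) → ℤ × ℤ → ℂ := fun f p => f (p.1, p.2 + 1)
    let uStar : (ℤ × ℤ → ℂ) → ℤ × ℤ → ℂ := fun f p => f (p.1, p.2 - 1)
    let absb : (ℤ × ℤ → ℂ) → ℤ × ℤ → ℂ := fun f p => qc p.2 * f p
    let v : (ℤ × ℤ → ℂ) → ℤ × ℤ → ℂ := fun f p => f (p.1 - 1, p.2)
    let vStar : (ℤ × ℤ → ℂ) → ℤ × ℤ → ℂ := fun f p => f (p.1 + 1, p.2)
    -- a and b are normal
    (∀ f, a (aStar f) = aStar (a f)) ∧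
    (∀ f, b (bStar f) = bStar (b f)) ∧
    -- u and v are unitary
    (∀ f, u (uStar f) = f) ∧ (∀ f, uStar (u f) = f) ∧
    (∀ f, v (vStar f) = f) ∧ (∀ f, vStar (v f) = f) ∧
    -- polar decompositions a = u|a| = |a|u, b = v|b| = |b|v
    (∀ f, a f = absa (u f)) ∧ (∀ f, a f = u (absa f)) ∧
    (∀ f, b f = absb (v f)) ∧ (∀ f, b f = v (absb f)) ∧
    -- commutation relations
    (∀ f, absa (v f) = (q : ℂ) • v (absa f)) ∧
    (∀ f, absb (u f) = ((q : ℂ))⁻¹ • u (absb f)) ∧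
    (∀ f, u (v f) = v (u f)) ∧
    (∀ f, absa (absb f) = absb (absa f)) := by
  intro qc a aStar b bStar absa u uStar absb v vStar
  have hq : (q : ℂ) ≠ 0 := by exact_mod_cast hq0.ne'
  refine ⟨?_, ?_, ?_, ?_, ?_, ?_, ?_, ?_, ?_, ?_, ?_, ?_, ?_, ?_⟩
  · intro f; funext p; simp [a, aStar]
  · intro f; funext p; simp [b, bStar]
  · intro f; funext p; simp [u, uStar]
  · intro f; funext p; simp [u, uStar]
  · intro f; funext p; simp [v, vStar]
  · intro f; funext p; simp [v, vStar]
  · intro f; rfl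
  · intro f; rfl
  · intro f; rfl
  · intro f; rfl
  · intro f; funext p
    simp only [absa, v, qc, Pi.smul_apply, smul_eq_mul]
    rw [show p.1 = (p.1 - 1) + 1 by ring, zpow_add_one₀ hq]
    ring_nf
  · intro f; funext p
    simp only [absb, u, qc, Pi.smul_apply, smul_eq_mul]
    rw [zpow_add_one₀ hq]
    field_simp
  · intro f; rfl
  · intro f; funext p; simp [absa, absb, qc]; ring
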